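/- Let k = 2s and 2 ≤ t ≤ s. If there exists a nonsingular k×k matrix E = (E_1, E_2) over F_q, where E_1 and E_2 are k×s, such that E_1, E_2, E_1+E_2, and E_1−E_2 all have the property that any t of their rows are linearly independent, then there exists a strong double large set of orthogonal arrays SDLOA(q^s; t, k, q). -/

import Mathlib

open Finset

/-- An orthogonal array of strength `t` with `k` rows (constraints), columns indexed
by `ι`, symbols in `α`, and index `lam`: in every choice of `t` distinct rows,
every `t`-tuple of symbols appears in exactly `lam` columns. -/
def IsOAOn {α ι : Type*} [Fintype α] [DecidableEq α] [Fintype ι] {k : ℕ} (t : ℕ)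
    (A : Fin k → ι → α) (lam : ℕ) : Prop :=
  ∀ rows : Fin t → Fin k, Function.Injective rows → ∀ x : Fin t → α,
    (Finset.univ.filter fun c : ι => ∀ i, A (rows i) c = x i).card = lam

/-- An array is simple if no two of its columns are identical. -/
def IsSimpleArr {α ι : Type*} {k : ℕ} (A : Fin k → ι → α) : Prop :=
  Function.Injective fun c : ι => fun i => A i c

/-- A large set of orthogonal arrays: a family (indexed by `σ`) of simple OAs of
strength `t` and index `lam` such that every `k`-tuple of symbols occurs as a
column of exactly one array of the family. -/
def IsLOAOn {α ι σ : Type*} [Fintype α] [DecidableEq α] [Fintype ι] {k : ℕ} (t : ℕ)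
    (A : σ → Fin k → ι → α) (lam : ℕ) : Prop :=
  (∀ s, IsOAOn t (A s) lam ∧ IsSimpleArr (A s)) ∧
  ∀ x : Fin k → α, ∃! p : σ × ι, (fun i => A p.1 i p.2) = x

/-- A strong double large set of orthogonal arrays `SDLOA(N; t, k, v)`:
the family `A_0, …, A_{N-1}` is an LOA, the derived arrays `B_j`
(whose `s`-th column is the `j`-th column of `A_s`) form an LOA, and the arrays
`D` (`j`-th column = `j`-th column of `A_j`) and `D'` (`j`-th column =
`(N-1-j)`-th column of `A_j`) are both OAs. -/
def IsSDLOA {α : Type*} [Fintype α] [DecidableEq α] {k N : ℕ} (t : ℕ)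
    (A : Fin N → Fin k → Fin N → α) (lam : ℕ) : Prop :=
  IsLOAOn t A lam ∧
  IsLOAOn t (fun (j : Fin N) (i : Fin k) (s : Fin N) => A s i j) lam ∧
  IsOAOn t (fun (i : Fin k) (j : Fin N) => A j i j) lam ∧
  IsOAOn t (fun (i : Fin k) (j : Fin N) => A j i (Fin.rev j)) lam

/-- A `t`-multimagic square of order `n`: an `n × n` matrix whose entries are the
consecutive integers `0, …, n^2 - 1` and such that, for every `1 ≤ e ≤ t`,
the entrywise `e`-th power has equal row sums, column sums, and sums on both
diagonals. -/
def IsMultimagic (n t : ℕ) (M : Fin n → Fin n → ℕ) : Prop :=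
  (∀ i j, M i j < n ^ 2) ∧
  (Function.Injective fun p : Fin n × Fin n => M p.1 p.2) ∧
  ∀ e, 1 ≤ e → e ≤ t → ∃ S,
    (∀ i, ∑ j, (M i j) ^ e = S) ∧ (∀ j, ∑ i, (M i j) ^ e = S) ∧
    (∑ i, (M i i) ^ e = S) ∧ (∑ i, (M i (Fin.rev i)) ^ e = S)

/-- A set of `m` complementary `t`-multimagic squares of order `n`, `m`-CMS(`n`,`t`):
`m` multimagic squares such that summing the `(t+1)`-st powers of the entries over
all `m` squares along any fixed row, any fixed column, or either diagonal always
gives `m · S_{t+1}(n)` (the conditions are stated multiplied through by `n`). -/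
def IsCMS (m n t : ℕ) (B : Fin m → Fin n → Fin n → ℕ) : Prop :=
  (∀ s, IsMultimagic n t (B s)) ∧
  (∀ i, n * ∑ s, ∑ j, (B s i j) ^ (t + 1) = m * ∑ k ∈ Finset.range (n ^ 2), k ^ (t + 1)) ∧
  (∀ j, n * ∑ s, ∑ i, (B s i j) ^ (t + 1) = m * ∑ k ∈ Finset.range (n ^ 2), k ^ (t + 1)) ∧
  (n * ∑ s, ∑ i, (B s i i) ^ (t + 1) = m * ∑ k ∈ Finset.range (n ^ 2), k ^ (t + 1)) ∧
  (n * ∑ s, ∑ i, (B s i (Fin.rev i)) ^ (t + 1) = m * ∑ k ∈ Finset.range (n ^ 2), k ^ (t + 1))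

/-- Any `t` rows of the matrix `M` are linearly independent. -/
def RowsIndep {F : Type*} [Field F] {m' : Type*} {s : ℕ} (t : ℕ)
    (M : Matrix m' (Fin s) F) : Prop :=
  ∀ rows : Fin t → m', Function.Injective rows → LinearIndependent F fun i => M (rows i)

/-- The block matrix `(A, B)` (with `A, B` of the same shape) is nonsingular, phrased
via bijectivity of the associated linear map. -/
def NonsingularPair {F : Type*} [Field F] {m' : Type*} {s : ℕ}
    (A B : Matrix m' (Fin s) F) : Prop :=
  Function.Bijective fun p : (Fin s → F) × (Fin s → F) => A.mulVec p.1 + B.mulVec p.2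

/-! Put `A_p(·, j) = E₁ φ(p) + E₂ φ(j)` for a bijection `φ : Fin N ≃ F^s`, `N = q^s`. Since
`(E₁, E₂)` is nonsingular, every `k`-tuple is a column of exactly one `A_p`, and likewise of
exactly one `B_j`. The arrays `A_p`, `B_j`, `D` are translates of the images of `F^s` under `E₂`,
`E₁`, `E₁ + E₂`, and so is `D'` under `E₁ - E₂` once `φ(N-1-j) = c - φ(j)`. A matrix any `t` of
whose rows are independent maps `F^s` onto an OA of index `q^s / q^t`: the projection to `t`
coordinates is a surjective linear map, so all of its fibres have that size. Finally a `φ` with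
`φ(N-1-j) = c - φ(j)` exists because, for a suitable `c`, both `j ↦ N-1-j` and `v ↦ c - v` are
involutions with at most one fixed point on sets of the same size, hence conjugate. -/

open Function Matrix

theorem Equiv.Perm.cycleType_eq_replicate_of_involutive {α : Type*} [Fintype α] [DecidableEq α]
    {σ : Perm α} (hσ : Involutive σ) (hfix : (fixedPoints σ).Subsingleton) :
    σ.cycleType = Multiset.replicate (Fintype.card α / 2) 2 := by
  have hsq : σ ^ 2 = 1 := Equiv.ext hσ
  have hsum := σ.sum_cycleType
  rw [cycleType_of_pow_prime_eq_one hsq, Multiset.sum_replicate, smul_eq_mul] at hsum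
  rw [cycleType_of_pow_prime_eq_one hsq]
  have hfixed : #σ.supportᶜ ≤ 1 := Finset.card_le_one.mpr fun a ha b hb =>
    hfix (by simpa using ha : σ a = a) (by simpa using hb : σ b = b)
  rw [Finset.card_compl] at hfixed
  have heven := two_dvd_card_support hsq
  have hle := σ.support.card_le_univ
  congr 1
  omega

theorem exists_equiv_semiconj_of_involutive {α β : Type*} [Fintype α] [DecidableEq α]
    [Fintype β] [DecidableEq β] {f : α → α} {g : β → β} (hcard : Fintype.card α = Fintype.card β)
    (hf : Involutive f) (hg : Involutive g) (hf1 : (fixedPoints f).Subsingleton)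
    (hg1 : (fixedPoints g).Subsingleton) : ∃ e : α ≃ β, Semiconj e f g := by
  let e₀ := Fintype.equivOfCardEq hcard
  let τ : Equiv.Perm α := e₀.symm.permCongr (hg.toPerm g)
  have hτ : Involutive τ := fun a => by simp [τ, hg _]
  have hτ1 : (fixedPoints τ).Subsingleton := fun a ha b hb =>
    e₀.injective <| hg1 (e₀.symm_apply_eq.mp ha) (e₀.symm_apply_eq.mp hb)
  have hconj : IsConj (hf.toPerm f) τ := by
    rw [Equiv.Perm.isConj_iff_cycleType_eq,
      Equiv.Perm.cycleType_eq_replicate_of_involutive hf hf1,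
      Equiv.Perm.cycleType_eq_replicate_of_involutive hτ hτ1]
  obtain ⟨c, hc⟩ := isConj_iff.mp hconj
  refine ⟨c.trans e₀, fun a => ?_⟩
  have hca : c (f a) = e₀.symm (g (e₀ (c a))) := by simpa [τ] using congrArg (· (c a)) hc
  exact (e₀.symm_apply_eq.mp hca.symm).symm

theorem Fin.fixedPoints_rev_subsingleton (n : ℕ) :
    (fixedPoints (Fin.rev : Fin n → Fin n)).Subsingleton := by
  intro i hi j hj
  have hi' := congrArg Fin.val hi.eq
  have hj' := congrArg Fin.val hj.eq
  rw [Fin.val_rev] at hi' hj'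
  ext
  omega

theorem exists_fixedPoints_sub_subsingleton (K : Type*) {V : Type*} [Field K] [AddCommGroup V]
    [Module K V] [Nontrivial V] : ∃ c : V, (fixedPoints (c - ·)).Subsingleton := by
  by_cases h2 : (2 : K) = 0
  · obtain ⟨c, hc⟩ := exists_ne (0 : V)
    refine ⟨c, fun u hu => (hc ?_).elim⟩
    rw [sub_eq_iff_eq_add.mp hu.eq, ← two_smul K, h2, zero_smul]
  · refine ⟨0, fun u hu v hv => smul_right_injective V h2 ?_⟩
    simp only [two_smul]
    rw [← sub_eq_iff_eq_add.mp hu.eq, ← sub_eq_iff_eq_add.mp hv.eq]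

theorem exists_equiv_fin_rev_eq_sub (K : Type*) {V : Type*} [Field K] [AddCommGroup V]
    [Module K V] [Nontrivial V] [Fintype V] [DecidableEq V] {n : ℕ} (hn : Fintype.card V = n) :
    ∃ (c : V) (φ : Fin n ≃ V), ∀ j, φ (Fin.rev j) = c - φ j := by
  obtain ⟨c, hc⟩ := exists_fixedPoints_sub_subsingleton K (V := V)
  obtain ⟨φ, hφ⟩ := exists_equiv_semiconj_of_involutive (by simp [hn]) Fin.rev_involutive
    (sub_sub_cancel c) (Fin.fixedPoints_rev_subsingleton n) hc
  exact ⟨c, φ, hφ⟩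

theorem AddMonoidHom.card_fiber_eq_of_surjective {G M : Type*} [AddGroup G] [Fintype G]
    [AddGroup M] [Fintype M] [DecidableEq M] (f : G →+ M) (hf : Surjective f) (y : M) :
    #{g | f g = y} = Fintype.card G / Fintype.card M := by
  have hconst (z : M) : #{g | f g = z} = #{g | f g = y} :=
    card_fiber_eq_of_mem_range f (hf z) (hf y)
  have hsum := Finset.card_eq_sum_card_fiberwise (f := f) (s := univ) (t := univ) (by simp)
  simp only [hconst, sum_const, card_univ, smul_eq_mul] at hsum
  rw [hsum, Nat.mul_div_cancel_left _ Fintype.card_pos]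

theorem Matrix.mulVec_surjective_of_linearIndependent_row {K m n : Type*} [Field K] [Fintype m]
    [Fintype n] {M : Matrix m n K} (h : LinearIndependent K M.row) : Surjective M.mulVec := by
  have : LinearMap.range M.mulVecLin = ⊤ := Submodule.eq_top_of_finrank_eq <| by
    rw [← Matrix.rank, h.rank_matrix, Module.finrank_fintype_fun_eq_card]
  exact LinearMap.range_eq_top.mp this

theorem IsOAOn.comp_equiv {α ι ι' : Type*} [Fintype α] [DecidableEq α] [Fintype ι] [Fintype ι']
    {k t lam : ℕ} {A : Fin k → ι → α} (hA : IsOAOn t A lam) (e : ι' ≃ ι) :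
    IsOAOn t (fun i j => A i (e j)) lam := by
  intro rows hrows x
  rw [← hA rows hrows x]
  exact Finset.card_equiv e (by simp)

theorem isOAOn_mulVec_add {F : Type*} [Field F] [Fintype F] [DecidableEq F] {k s t : ℕ}
    (M : Matrix (Fin k) (Fin s) F) (b : Fin k → F) (hM : RowsIndep t M) :
    IsOAOn t (fun i (v : Fin s → F) => (M *ᵥ v + b) i)
      (Fintype.card F ^ s / Fintype.card F ^ t) := by
  intro rows hrows x
  let M' := M.submatrix rows id
  have hsurj : Surjective M'.mulVec :=
    Matrix.mulVec_surjective_of_linearIndependent_row (hM rows hrows)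
  have hfilter (v : Fin s → F) :
      (∀ i, (M *ᵥ v + b) (rows i) = x i) ↔ M'.mulVecLin.toAddMonoidHom v = x - b ∘ rows := by
    rw [funext_iff]
    exact forall_congr' fun i => eq_sub_iff_add_eq.symm
  simp_rw [hfilter]
  rw [AddMonoidHom.card_fiber_eq_of_surjective M'.mulVecLin.toAddMonoidHom hsurj]
  simp

namespace NonsingularPair

variable {F m : Type*} [Field F] {s : ℕ} {A B : Matrix m (Fin s) F}

theorem symm (h : NonsingularPair A B) : NonsingularPair B A := by
  simpa [NonsingularPair, comp_def, add_comm] using h.comp (Equiv.prodComm _ _).bijective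

theorem injective_mulVec_left (h : NonsingularPair A B) : Injective A.mulVec := fun u v huv =>
  congrArg Prod.fst (h.injective (a₁ := (u, 0)) (a₂ := (v, 0)) (by simp [huv]))

end NonsingularPair

theorem isLOAOn_mulVec_add {F σ ι : Type*} [Field F] [Fintype F] [DecidableEq F] [Fintype ι]
    {k s t : ℕ} {E₁ E₂ : Matrix (Fin k) (Fin s) F} (hE : NonsingularPair E₁ E₂)
    (h₂ : RowsIndep t E₂) (ψ : σ ≃ (Fin s → F)) (φ : ι ≃ (Fin s → F)) :
    IsLOAOn t (fun p i j => (E₁ *ᵥ ψ p + E₂ *ᵥ φ j) i)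
      (Fintype.card F ^ s / Fintype.card F ^ t) := by
  refine ⟨fun p => ⟨?_, fun j j' hj => ?_⟩, fun x => ?_⟩
  · simpa only [add_comm] using (isOAOn_mulVec_add E₂ (E₁ *ᵥ ψ p) h₂).comp_equiv φ
  · exact φ.injective (hE.symm.injective_mulVec_left (add_left_cancel hj))
  · obtain ⟨⟨u, v⟩, huv⟩ := hE.surjective x
    refine ⟨(ψ.symm u, φ.symm v), by simp only [Equiv.apply_symm_apply]; exact huv, ?_⟩
    rintro ⟨p, j⟩ hpj
    obtain ⟨hp, hj⟩ := Prod.mk.inj (hE.injective (a₁ := (ψ p, φ j)) (hpj.trans huv.symm))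
    exact Prod.ext (ψ.eq_symm_apply.mpr hp) (φ.eq_symm_apply.mpr hj)

/-- Let `k = 2s`, `2 ≤ t ≤ s`. If there is a nonsingular matrix
`E = (E₁, E₂)` over `F_q` with `E₁, E₂, E₁+E₂, E₁-E₂` all having any `t` rows
linearly independent, then there exists an SDLOA(q^s; t, 2s, q). -/
theorem sdloa_of_matrix {F : Type} [Field F] [Fintype F] [DecidableEq F] {s t : ℕ}
    (ht : 2 ≤ t) (hts : t ≤ s)
    (E1 E2 : Matrix (Fin (2 * s)) (Fin s) F)
    (hns : NonsingularPair E1 E2)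
    (h1 : RowsIndep t E1) (h2 : RowsIndep t E2)
    (h3 : RowsIndep t (E1 + E2)) (h4 : RowsIndep t (E1 - E2)) :
    ∃ A : Fin (Fintype.card F ^ s) → Fin (2 * s) → Fin (Fintype.card F ^ s) → F,
      IsSDLOA t A (Fintype.card F ^ s / Fintype.card F ^ t) := by
  have : Nonempty (Fin s) := ⟨⟨0, by omega⟩⟩
  obtain ⟨c, φ, hφ⟩ := exists_equiv_fin_rev_eq_sub F (V := Fin s → F)
    (n := Fintype.card F ^ s) (by simp)
  refine ⟨fun p i j => (E1 *ᵥ φ p + E2 *ᵥ φ j) i, isLOAOn_mulVec_add hns h2 φ φ, ?_, ?_, ?_⟩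
  · simpa only [add_comm] using isLOAOn_mulVec_add hns.symm h1 φ φ
  · simpa [add_mulVec] using (isOAOn_mulVec_add (E1 + E2) 0 h3).comp_equiv φ
  · convert (isOAOn_mulVec_add (E1 - E2) (E2 *ᵥ c) h4).comp_equiv φ using 3
    simp only [hφ, mulVec_sub, sub_mulVec]
    exact congrFun (by abel) _
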